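/- arXiv:1909.02686 — 2 statements merged into one kernel-verified Lean document; each statement's English description precedes it below -/
import Mathlib

section
/- Let T be an ℕ-valued random variable and suppose there exist a > 0 and a natural number m ≥ 1 such that P(T ≤ t) ≤ a·t^m for every natural number t. Then E[T] ≥ (m/(m+1)) · a^{−1/m}. -/
/-!
Since `T` is `ℕ`-valued, `E[T] = ∑ₜ P(T > t) ≥ ∑ₜ (1 - a tᵐ)⁺`. The summand is antitone in `t`,
so the sum dominates `∫₀^∞ (1 - a xᵐ)⁺ dx`, which equals `(m / (m + 1)) c` for `c = a^(-1/m)`,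
the zero of `1 - a xᵐ`.
-/

open MeasureTheory
open scoped ENNReal
open Finset

theorem integral_one_sub_mul_pow (a c : ℝ) (m : ℕ) :
    ∫ x in (0 : ℝ)..c, (1 - a * x ^ m) = c - a * (c ^ (m + 1) / (m + 1)) := by
  rw [intervalIntegral.integral_sub intervalIntegrable_const
    (((continuous_pow m).const_mul a).intervalIntegrable _ _),
    intervalIntegral.integral_const_mul, integral_pow]
  simp

theorem integral_max_one_sub_mul_pow_of_mul_pow_eq_one {a c : ℝ} {m : ℕ} (ha : 0 ≤ a)
    (hc : 0 ≤ c) (hac : a * c ^ m = 1) :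
    ∫ x in (0 : ℝ)..c, max (1 - a * x ^ m) 0 = m / (m + 1) * c := by
  have hpos : ∀ x ∈ Set.uIcc 0 c, max (1 - a * x ^ m) 0 = 1 - a * x ^ m := by
    rw [Set.uIcc_of_le hc]
    refine fun x hx ↦ max_eq_left ?_
    have := mul_le_mul_of_nonneg_left (pow_le_pow_left₀ hx.1 hx.2 m) ha
    linarith
  rw [intervalIntegral.integral_congr hpos, integral_one_sub_mul_pow, pow_succ, ← mul_div_assoc,
    ← mul_assoc, hac]
  field_simp
  ring

theorem AntitoneOn.integral_le_sum_range_ceil {f : ℝ → ℝ} (hf : AntitoneOn f (Set.Ici 0))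
    (hf0 : ∀ x, 0 ≤ f x) {c : ℝ} (hc : 0 ≤ c) :
    ∫ x in (0 : ℝ)..c, f x ≤ ∑ t ∈ range ⌈c⌉₊, f t := by
  have hN : (0 : ℝ) ≤ ⌈c⌉₊ := Nat.cast_nonneg _
  calc ∫ x in (0 : ℝ)..c, f x
      ≤ ∫ x in (0 : ℝ)..⌈c⌉₊, f x :=
        intervalIntegral.integral_mono_interval le_rfl hc (Nat.le_ceil c) (.of_forall hf0)
          (hf.mono (by rw [Set.uIcc_of_le hN]; exact Set.Icc_subset_Ici_self)).intervalIntegrable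
    _ ≤ ∑ t ∈ range ⌈c⌉₊, f t := by
        simpa using (hf.mono Set.Icc_subset_Ici_self).integral_le_sum (x₀ := 0)

theorem mul_rpow_neg_inv_pow {a : ℝ} (ha : 0 < a) {m : ℕ} (hm : m ≠ 0) :
    a * (a ^ (-(1 / (m : ℝ)))) ^ m = 1 := by
  rw [← Real.rpow_natCast, ← Real.rpow_mul ha.le, neg_mul, one_div,
    inv_mul_cancel₀ (Nat.cast_ne_zero.mpr hm), Real.rpow_neg_one, mul_inv_cancel₀ ha.ne']

theorem sum_measure_lt_le_lintegral {Ω : Type*} [MeasurableSpace Ω] (μ : Measure Ω)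
    {T : Ω → ℕ} (hT : Measurable T) (N : ℕ) :
    ∑ t ∈ range N, μ {ω | t < T ω} ≤ ∫⁻ ω, (T ω : ℝ≥0∞) ∂μ := by
  have hmeas : ∀ t : ℕ, MeasurableSet {ω | t < T ω} := fun t ↦ hT measurableSet_Ioi
  calc ∑ t ∈ range N, μ {ω | t < T ω}
      = ∫⁻ ω, ∑ t ∈ range N, {ω | t < T ω}.indicator 1 ω ∂μ := by
        simp_rw [← lintegral_indicator_one (hmeas _)]
        rw [lintegral_finsetSum _ fun t _ ↦ measurable_one.indicator (hmeas t)]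
    _ ≤ ∫⁻ ω, (T ω : ℝ≥0∞) ∂μ := by
        refine lintegral_mono fun ω ↦ ?_
        simp only [Set.indicator_apply, Set.mem_ofPred_eq, Pi.one_apply, sum_boole]
        exact_mod_cast (card_le_card fun t ht ↦ mem_range.2 (mem_filter.1 ht).2).trans
          (card_range (T ω)).le

theorem ofReal_one_sub_le_measure_lt {Ω : Type*} [MeasurableSpace Ω] (μ : Measure Ω)
    [IsProbabilityMeasure μ] {T : Ω → ℕ} (hT : Measurable T) {t : ℕ} {b : ℝ}
    (hb : μ.real {ω | T ω ≤ t} ≤ b) :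
    ENNReal.ofReal (1 - b) ≤ μ {ω | t < T ω} := by
  have hcompl : {ω | t < T ω} = {ω | T ω ≤ t}ᶜ := by ext; simp
  have hle : MeasurableSet {ω | T ω ≤ t} := hT measurableSet_Iic
  rw [hcompl, ← ofReal_measureReal, probReal_compl_eq_one_sub hle]
  exact ENNReal.ofReal_le_ofReal (by linarith)

/-- If `T` is an `ℕ`-valued random variable with `P(T ≤ t) ≤ a·t^m` for all `t : ℕ`,
where `a > 0` and `m ≥ 1`, then `E[T] ≥ (m/(m+1)) · a^{−1/m}`. -/
theorem mean_lower_bound_of_cdf_poly (Ω : Type*) [MeasurableSpace Ω] (μ : Measure Ω)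
    [IsProbabilityMeasure μ] (T : Ω → ℕ) (hT : Measurable T)
    (a : ℝ) (m : ℕ) (ha : 0 < a) (hm : 1 ≤ m)
    (htail : ∀ t : ℕ, (μ {ω | T ω ≤ t}).toReal ≤ a * (t : ℝ) ^ m) :
    ENNReal.ofReal (((m : ℝ) / (m + 1)) * a ^ (-(1 / (m : ℝ)))) ≤
      ∫⁻ ω, (T ω : ℝ≥0∞) ∂μ := by
  set c := a ^ (-(1 / (m : ℝ)))
  have hc : 0 ≤ c := (Real.rpow_pos_of_pos ha _).le
  set g : ℝ → ℝ := fun x ↦ max (1 - a * x ^ m) 0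
  have hg : AntitoneOn g (Set.Ici 0) := fun x hx y _ hxy ↦
    max_le_max_right 0 (by gcongr)
  calc ENNReal.ofReal (m / (m + 1) * c)
      = ENNReal.ofReal (∫ x in (0 : ℝ)..c, g x) := by
        rw [integral_max_one_sub_mul_pow_of_mul_pow_eq_one ha.le hc
          (mul_rpow_neg_inv_pow ha (by omega))]
    _ ≤ ENNReal.ofReal (∑ t ∈ range ⌈c⌉₊, g t) :=
        ENNReal.ofReal_le_ofReal (hg.integral_le_sum_range_ceil (fun _ ↦ le_max_right _ _) hc)
    _ = ∑ t ∈ range ⌈c⌉₊, ENNReal.ofReal (1 - a * (t : ℝ) ^ m) := by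
        rw [ENNReal.ofReal_sum_of_nonneg fun _ _ ↦ le_max_right _ _]
        simp only [ENNReal.ofReal_max, ENNReal.ofReal_zero, zero_le, max_eq_left]
    _ ≤ ∑ t ∈ range ⌈c⌉₊, μ {ω | t < T ω} :=
        sum_le_sum fun t _ ↦ ofReal_one_sub_le_measure_lt μ hT (htail t)
    _ ≤ ∫⁻ ω, (T ω : ℝ≥0∞) ∂μ := sum_measure_lt_le_lintegral μ hT _
end

section
/- Fix M ≥ 1, let P₀, P₁ : α → ℝ≥0 be density functions, and let Q₀, Q₁ : β → ℝ≥0 be density functions with the 'reverse' property that the mixture identity of the previous statement holds (i.e., in the construction take the post-change density on compromised coordinates equal to the pre-change honest density and vice versa). Then for any x : Fin(2M) → α (the first 2M coordinates) and y : Fin n → β (the remaining n honest coordinates), the ratio [ Σ_{S ⊆ Fin(2M), |S|=M} ∏_{i∈S} P₁(x i) ∏_{i∉S} P₀(x i) · ∏_j Q₁(y j) ] / [ Σ_{S ⊆ Fin(2M), |S|=M} ∏_{i∈S} P₀(x i) ∏_{i∉S} P₁(x i) · ∏_j Q₀(y j) ] equals ∏_j Q₁(y j) / ∏_j Q₀(y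 j), whenever the denominator is nonzero. -/
open scoped NNReal

/-- Reverse-attack cancellation (equation (25) of the paper): the likelihood ratio of the
transformed problem depends only on the revealed honest coordinates.  For any
`x : Fin (2M) → α` and `y : Fin n → β`, whenever the denominator is nonzero,
`[Σ_{|S|=M} ∏_{i∈S} P₁(x i) ∏_{i∉S} P₀(x i) · ∏_j Q₁(y j)] /
 [Σ_{|S|=M} ∏_{i∈S} P₀(x i) ∏_{i∉S} P₁(x i) · ∏_j Q₀(y j)] = ∏_j Q₁(y j) / ∏_j Q₀(y j)`. -/
theorem reverse_attack_ratio {α β : Type*} (M n : ℕ) (hM : 1 ≤ M)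
    (P₀ P₁ : α → ℝ≥0) (Q₀ Q₁ : β → ℝ≥0)
    (x : Fin (2 * M) → α) (y : Fin n → β)
    (hden : (∑ S ∈ Finset.powersetCard M (Finset.univ : Finset (Fin (2 * M))),
        (∏ i ∈ S, P₀ (x i)) * (∏ i ∈ Sᶜ, P₁ (x i))) * (∏ j, Q₀ (y j)) ≠ 0) :
    ((∑ S ∈ Finset.powersetCard M (Finset.univ : Finset (Fin (2 * M))),
        (∏ i ∈ S, P₁ (x i)) * (∏ i ∈ Sᶜ, P₀ (x i))) * (∏ j, Q₁ (y j))) /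
      ((∑ S ∈ Finset.powersetCard M (Finset.univ : Finset (Fin (2 * M))),
        (∏ i ∈ S, P₀ (x i)) * (∏ i ∈ Sᶜ, P₁ (x i))) * (∏ j, Q₀ (y j))) =
    (∏ j, Q₁ (y j)) / (∏ j, Q₀ (y j)) := by
  have hsum : (∑ S ∈ Finset.powersetCard M (Finset.univ : Finset (Fin (2 * M))),
        (∏ i ∈ S, P₁ (x i)) * (∏ i ∈ Sᶜ, P₀ (x i))) =
      (∑ S ∈ Finset.powersetCard M (Finset.univ : Finset (Fin (2 * M))),
        (∏ i ∈ S, P₀ (x i)) * (∏ i ∈ Sᶜ, P₁ (x i))) := by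
    refine Finset.sum_nbij' (fun S => Sᶜ) (fun S => Sᶜ) ?_ ?_ ?_ ?_ ?_
    · intro S hS
      simp only [Finset.mem_powersetCard_univ] at hS ⊢
      rw [Finset.card_compl, hS, Fintype.card_fin]
      omega
    · intro S hS
      simp only [Finset.mem_powersetCard_univ] at hS ⊢
      rw [Finset.card_compl, hS, Fintype.card_fin]
      omega
    · intro S _; exact compl_compl S
    · intro S _; exact compl_compl S
    · intro S _
      rw [compl_compl, mul_comm]
  rw [hsum]
  have hA : (∑ S ∈ Finset.powersetCard M (Finset.univ : Finset (Fin (2 * M))),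
        (∏ i ∈ S, P₀ (x i)) * (∏ i ∈ Sᶜ, P₁ (x i))) ≠ 0 :=
    fun h => hden (by rw [h, zero_mul])
  rw [mul_div_mul_left _ _ hA]
end
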